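/- arXiv:1803.05707 — 2 statements merged into one kernel-verified Lean document; each statement's English description precedes it below -/
import Mathlib

section
/- Let A be an n×n positive semidefinite Hermitian complex matrix with one-dimensional kernel spanned by a unit vector z, and suppose the largest eigenvalue of A + z z^H equals 1. Then the spectral radius of z z^H − (I − A) is strictly less than 1. -/
open Matrix ComplexOrder

/-! The quadratic form of `A + z zᴴ` is `xᴴ A x + |zᴴ x|²`, which vanishes only on
`ker A ∩ z^⊥ = 0`; so `A + z zᴴ` is positive definite, its eigenvalues lie in `(0, 1]`, and the
spectrum of `z zᴴ - (1 - A) = (A + z zᴴ) - 1` lies in `(-1, 0]`. -/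

namespace Matrix

variable {n : Type*} [Fintype n] {𝕜 : Type*} [RCLike 𝕜]

theorem PosSemidef.posDef_add_of_mulVec_eq_zero {A B : Matrix n n 𝕜} (hA : A.PosSemidef)
    (hB : B.PosSemidef) (hker : ∀ v, A *ᵥ v = 0 → B *ᵥ v = 0 → v = 0) : (A + B).PosDef := by
  refine PosDef.of_dotProduct_mulVec_pos (hA.add hB).isHermitian fun v hv => ?_
  rw [add_mulVec, dotProduct_add]
  have hAv := hA.dotProduct_mulVec_nonneg v
  have hBv := hB.dotProduct_mulVec_nonneg v
  refine lt_of_le_of_ne (add_nonneg hAv hBv) fun hsum => hv (hker v ?_ ?_)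
  · exact (hA.dotProduct_mulVec_zero_iff v).mp (le_antisymm (by
      rw [hsum]; exact le_add_of_nonneg_right hBv) hAv)
  · exact (hB.dotProduct_mulVec_zero_iff v).mp (le_antisymm (by
      rw [hsum]; exact le_add_of_nonneg_left hAv) hBv)

theorem posDef_add_vecMulVec_star_of_ker_le_span {A : Matrix n n 𝕜} {z : n → 𝕜}
    (hA : A.PosSemidef) (hker : ∀ v, A *ᵥ v = 0 → ∃ c : 𝕜, v = c • z) :
    (A + vecMulVec z (star z)).PosDef := by
  refine hA.posDef_add_of_mulVec_eq_zero (posSemidef_vecMulVec_self_star z) fun v hAv hzv => ?_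
  obtain ⟨c, rfl⟩ := hker v hAv
  rw [vecMulVec_mulVec, dotProduct_smul, smul_eq_mul, op_smul_eq_smul, smul_eq_zero, mul_eq_zero,
    dotProduct_star_self_eq_zero] at hzv
  rcases hzv with (hc | hz) | hz <;> simp [*]

theorem IsHermitian.norm_lt_one_of_mem_spectrum_sub_one [DecidableEq n] {B : Matrix n n 𝕜}
    (hB : B.IsHermitian) (hpos : ∀ i, 0 < hB.eigenvalues i) (hle : ∀ i, hB.eigenvalues i ≤ 1)
    {μ : 𝕜} (hμ : μ ∈ spectrum 𝕜 (B - 1)) : ‖μ‖ < 1 := by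
  rw [sub_eq_neg_add, ← map_one (algebraMap 𝕜 (Matrix n n 𝕜)), ← spectrum.add_mem_iff,
    hB.spectrum_eq_image_range] at hμ
  obtain ⟨_, ⟨i, rfl⟩, hi⟩ := hμ
  rw [eq_sub_of_add_eq hi.symm, ← RCLike.ofReal_one, ← RCLike.ofReal_sub, RCLike.norm_ofReal,
    abs_lt]
  constructor <;> linarith [hpos i, hle i]

end Matrix

theorem stmt_4_general (n : ℕ) (A : Matrix (Fin n) (Fin n) ℂ) (z : Fin n → ℂ)
    (hA : A.PosSemidef)
    (hker1 : ∀ v, A.mulVec v = 0 → ∃ c : ℂ, v = c • z)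
    (hH : (A + Matrix.vecMulVec z (star z)).IsHermitian)
    (hmax_le : ∀ i, hH.eigenvalues i ≤ 1) :
    ∀ μ ∈ spectrum ℂ (Matrix.vecMulVec z (star z) - (1 - A)), ‖μ‖ < 1 := by
  intro μ hμ
  have hpos := (posDef_add_vecMulVec_star_of_ker_le_span hA hker1).eigenvalues_pos
  rw [show vecMulVec z (star z) - (1 - A) = A + vecMulVec z (star z) - 1 by abel] at hμ
  exact hH.norm_lt_one_of_mem_spectrum_sub_one hpos hmax_le hμ

theorem stmt_4 (n : ℕ) (A : Matrix (Fin n) (Fin n) ℂ) (z : Fin n → ℂ)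
    (hA : A.PosSemidef)
    (hz : star z ⬝ᵥ z = 1)
    (hker : A.mulVec z = 0)
    (hker1 : ∀ v, A.mulVec v = 0 → ∃ c : ℂ, v = c • z)
    (hH : (A + Matrix.vecMulVec z (star z)).IsHermitian)
    (hmax_le : ∀ i, hH.eigenvalues i ≤ 1)
    (hmax_eq : ∃ i, hH.eigenvalues i = 1) :
    ∀ μ ∈ spectrum ℂ (Matrix.vecMulVec z (star z) - (1 - A)), ‖μ‖ < 1 :=
  stmt_4_general n A z hA hker1 hH hmax_le
end

section
/- Let G_x, G_xy, G_yx, G_y be P×P diagonal matrices, Σ a P×P Hermitian matrix, and G̃ = [[G_x, G_xy],[G_yx, G_y]]. Define G_1 = [[G_x, 0],[0, G_yx]] and G_2 = [[G_xy, 0],[0, G_y]]. Then G̃ (I_2 ⊗ Σ) G̃^H = G_1 (𝟙_2 𝟙_2ᵀ ⊗ Σ) G_1^H + G_2 (𝟙_2 𝟙_2ᵀ ⊗ Σ) G_2^H, where 𝟙_2 = (1,1)ᵀ. -/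
open Matrix

theorem stmt_12 (P : ℕ) (gx gxy gyx gy : Fin P → ℂ)
    (Gx Gxy Gyx Gy : Matrix (Fin P) (Fin P) ℂ)
    (hGx : Gx = Matrix.diagonal gx) (hGxy : Gxy = Matrix.diagonal gxy)
    (hGyx : Gyx = Matrix.diagonal gyx) (hGy : Gy = Matrix.diagonal gy)
    (Sig : Matrix (Fin P) (Fin P) ℂ) (hSig : Sig.IsHermitian)
    (Gt G1 G2 : Matrix (Fin P ⊕ Fin P) (Fin P ⊕ Fin P) ℂ)
    (hGt : Gt = Matrix.fromBlocks Gx Gxy Gyx Gy)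
    (hG1 : G1 = Matrix.fromBlocks Gx 0 0 Gyx)
    (hG2 : G2 = Matrix.fromBlocks Gxy 0 0 Gy) :
    Gt * Matrix.fromBlocks Sig 0 0 Sig * Gtᴴ
      = G1 * Matrix.fromBlocks Sig Sig Sig Sig * G1ᴴ
        + G2 * Matrix.fromBlocks Sig Sig Sig Sig * G2ᴴ := by
  subst hGt hG1 hG2
  simp [Matrix.fromBlocks_multiply, Matrix.fromBlocks_conjTranspose, Matrix.fromBlocks_add, mul_add, add_mul]
end
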